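/- Let τ be a finite type over Ω. Then for all countable ordinals α and γ: Iter_α^{τ→τ}(Iter_γ^τ) =hp Iter_{γ^α}^τ, where γ^α is ordinal exponentiation and Iter_α^{τ→τ} is the α-iteration functional at type τ→τ applied to the type-τ iteration functional Iter_γ^τ. -/

import Mathlib

/-!  Framework: finite type structure over Ω = countable ordinals,
     limsup/liminf, transfinite iteration functionals, hereditarily
     positive and hereditarily monotone functionals. -/

noncomputable section
namespace IterOrd

open Ordinal

theorem omega1_pos : (0 : Ordinal) < ω₁ := Ordinal.omega0_pos.trans Ordinal.omega0_lt_omega_one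

/-- `Om` is Ω, the set of countable ordinals (ordinals `< ω₁`). -/
abbrev Om : Type 1 := {o : Ordinal // o < ω₁}

/-- Infimum of a subset of Ω (the minimum for nonempty sets; `0` for `∅`). -/
def infOm (s : Set Om) : Om :=
  ⟨sInf (Subtype.val '' s), by
    rcases (Subtype.val '' s).eq_empty_or_nonempty with h | h
    · rw [h]; simpa using omega1_pos
    · obtain ⟨x, _, he⟩ := csInf_mem h
      exact he ▸ x.2⟩

/-- Supremum of a subset of Ω.  Whenever the supremum of the set exists in Ω
(in particular for every countable subset, by regularity of `ω₁`) this is the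
genuine supremum; otherwise it takes a junk value. -/
def supOm (s : Set Om) : Om :=
  if h : sSup (Subtype.val '' s) < ω₁ then ⟨sSup (Subtype.val '' s), h⟩ else ⟨0, omega1_pos⟩

/-- Finite types over the base type `o` (interpreted as Ω). -/
inductive Ty : Type
  | base : Ty
  | arrow : Ty → Ty → Ty
deriving DecidableEq

/-- The full type structure over Ω: `El base = Ω` and
`El (arrow σ τ)` is the set of all functions `El σ → El τ`. -/
@[reducible] def El : Ty → Type 1
  | .base => Om
  | .arrow σ τ => El σ → El τ

/-- The order on each `El σ`: the ordinal order at base type, pointwise at arrow types. -/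
def Le : (σ : Ty) → El σ → El σ → Prop
  | .base => fun x y => x ≤ y
  | .arrow σ τ => fun f g => ∀ x : El σ, Le τ (f x) (g x)

/-- Suprema, computed pointwise at function types. -/
def supEl : (σ : Ty) → Set (El σ) → El σ
  | .base => supOm
  | .arrow σ τ => fun S (x : El σ) => supEl τ ((fun f : El (.arrow σ τ) => f x) '' S)

/-- Infima, computed pointwise at function types. -/
def infEl : (σ : Ty) → Set (El σ) → El σ
  | .base => infOm
  | .arrow σ τ => fun S (x : El σ) => infEl τ ((fun f : El (.arrow σ τ) => f x) '' S)

/-- `limsup_{ξ→ζ} f ξ = inf_{γ<ζ} sup_{γ≤ξ<ζ} f ξ`. -/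
def limsupEl (σ : Ty) (ζ : Ordinal) (f : ∀ ξ : Ordinal, ξ < ζ → El σ) : El σ :=
  infEl σ {y | ∃ γ, ∃ _ : γ < ζ, y = supEl σ {z | ∃ ξ, ∃ h : ξ < ζ, γ ≤ ξ ∧ z = f ξ h}}

/-- `liminf_{ξ→ζ} f ξ = sup_{γ<ζ} inf_{γ≤ξ<ζ} f ξ`. -/
def liminfEl (σ : Ty) (ζ : Ordinal) (f : ∀ ξ : Ordinal, ξ < ζ → El σ) : El σ :=
  supEl σ {y | ∃ γ, ∃ _ : γ < ζ, y = infEl σ {z | ∃ ξ, ∃ h : ξ < ζ, γ ≤ ξ ∧ z = f ξ h}}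

/-- `limsup` of a ζ-indexed sequence of ordinals. -/
def oLimsup (ζ : Ordinal) (a : Ordinal → Ordinal) : Ordinal :=
  sInf {s | ∃ γ, γ < ζ ∧ s = sSup (a '' {ξ | γ ≤ ξ ∧ ξ < ζ})}

/-- `liminf` of a ζ-indexed sequence of ordinals. -/
def oLiminf (ζ : Ordinal) (a : Ordinal → Ordinal) : Ordinal :=
  sSup {s | ∃ γ, γ < ζ ∧ s = sInf (a '' {ξ | γ ≤ ξ ∧ ξ < ζ})}

/-- The α-iteration functional of type σ:
`Iter 0 f x = x`, `Iter (α+1) f x = f (Iter α f x)`, and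
`Iter μ f x = limsup_{ξ→μ} Iter ξ f x` for limit μ. -/
def Iter (σ : Ty) (α : Ordinal) : (El σ → El σ) → El σ → El σ :=
  Ordinal.limitRecOn (motive := fun _ => (El σ → El σ) → El σ → El σ) α
    (fun _ x => x)
    (fun _ ih f x => f (ih f x))
    (fun μ _ ih f x => limsupEl σ μ (fun ξ h => ih ξ h f x))

/-- The pair (hereditarily positive, ≤hp), defined simultaneously by recursion on the type.
Every element of `Ω` and of `Ω_{ρ→τ}` with `ρ ≠ τ` is h.p., and `≤hp` there is `≤`;
`f : Ω_{τ→τ}` is h.p. iff it preserves h.p., is inflationary on h.p. arguments and is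
monotone (w.r.t. `≤hp`) on h.p. arguments; `f ≤hp f'` on `Ω_{τ→τ}` iff `f x ≤hp f' x`
for every h.p. `x`. -/
def HPaux : (σ : Ty) → (El σ → Prop) × (El σ → El σ → Prop)
  | .base => ⟨fun _ => True, fun x y => x ≤ y⟩
  | .arrow ρ τ =>
      ⟨fun f =>
        if h : ρ = τ then
          (∀ x, (HPaux ρ).1 x → (HPaux τ).1 (f x)) ∧
          (∀ x, (HPaux ρ).1 x → (HPaux τ).2 (cast (congrArg El h) x) (f x)) ∧
          (∀ x y, (HPaux ρ).1 x → (HPaux ρ).1 y → (HPaux ρ).2 x y → (HPaux τ).2 (f x) (f y))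
        else True,
       fun f g =>
        if ρ = τ then ∀ x, (HPaux ρ).1 x → (HPaux τ).2 (f x) (g x)
        else Le (.arrow ρ τ) f g⟩

/-- Hereditarily positive functionals. -/
def Hp (σ : Ty) : El σ → Prop := (HPaux σ).1

/-- The order `≤hp`. -/
def HpLe (σ : Ty) : El σ → El σ → Prop := (HPaux σ).2

/-- `f =hp g` iff `f ≤hp g` and `g ≤hp f`. -/
def HpEq (σ : Ty) (f g : El σ) : Prop := HpLe σ f g ∧ HpLe σ g f

/-- The pair (hereditarily monotone, ≤ on the hereditarily monotone structure),
by recursion on the type.  `f` is hereditarily monotone iff it maps hereditarily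
monotone arguments to hereditarily monotone values, monotonically; the order is
pointwise over hereditarily monotone arguments (i.e. the order of `Ω^mon`). -/
def HMaux : (σ : Ty) → (El σ → Prop) × (El σ → El σ → Prop)
  | .base => ⟨fun _ => True, fun x y => x ≤ y⟩
  | .arrow σ τ =>
      ⟨fun f =>
        (∀ x, (HMaux σ).1 x → (HMaux τ).1 (f x)) ∧
        (∀ x y, (HMaux σ).1 x → (HMaux σ).1 y → (HMaux σ).2 x y → (HMaux τ).2 (f x) (f y)),
       fun f g => ∀ x, (HMaux σ).1 x → (HMaux τ).2 (f x) (g x)⟩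

/-- Hereditarily monotone functionals: the members of the type structure `Ω^mon`. -/
def HM (σ : Ty) : El σ → Prop := (HMaux σ).1

/-- The (pointwise) order of the hereditarily monotone type structure `Ω^mon`. -/
def LeHM (σ : Ty) : El σ → El σ → Prop := (HMaux σ).2

/-- Equality in the hereditarily monotone type structure `Ω^mon`. -/
def EqHM (σ : Ty) (f g : El σ) : Prop := LeHM σ f g ∧ LeHM σ g f

/-!
For `γ ≥ 1` the functional `Iter γ` is hereditarily positive, and iteration is hp-additive and
hp-multiplicative in the ordinal: `Iter (β + δ) f x =hp Iter δ f (Iter β f x)` and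
`Iter (β * δ) f x =hp Iter δ (Iter β f) x`. At a successor this turns `Iter γ (Iter (γ ^ α) g)` into
`Iter (γ ^ α * γ) g`. At a limit `α` both sides are limsups of hp-monotone sequences; such a
limsup behaves like a supremum, so it is unchanged by passing to the cofinal subsequence
`γ ^ ξ`, `ξ < α`, of `γ ^ α`. For `γ = 0` and `γ = 1` the functional `Iter γ` is constant,
resp. the identity, so its iterates stabilise after one step.
-/

theorem sSup_lt_omega_one {s : Set Ordinal} (hc : s.Countable) (hs : ∀ x ∈ s, x < ω₁) :
    sSup s < ω₁ := by
  rcases s.eq_empty_or_nonempty with rfl | hne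
  · simpa using omega1_pos
  · obtain ⟨f, rfl⟩ := hc.exists_eq_range hne
    rw [sSup_range]
    exact Ordinal.iSup_lt_omega_one fun n => hs _ (Set.mem_range_self n)

theorem countable_Iio_of_lt_omega_one {ζ : Ordinal} (h : ζ < ω₁) : (Set.Iio ζ).Countable := by
  rwa [← Cardinal.le_aleph0_iff_set_countable, Cardinal.mk_Iio_ordinal, Cardinal.lift_le_aleph0,
    ← Cardinal.lt_aleph_one_iff, ← Cardinal.lt_omega_iff_card_lt]

theorem Le.refl : ∀ {σ : Ty} (x : El σ), Le σ x x
  | .base, _ => le_rfl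
  | .arrow _ _, f => fun a => Le.refl (f a)

theorem Le.trans : ∀ {σ : Ty} {x y z : El σ}, Le σ x y → Le σ y z → Le σ x z
  | .base, _, _, _, h, h' => le_trans h h'
  | .arrow _ _, _, _, _, h, h' => fun a => Le.trans (h a) (h' a)

theorem le_supEl : ∀ {σ : Ty} {S : Set (El σ)}, S.Countable → ∀ {x}, x ∈ S → Le σ x (supEl σ S)
  | .base, S, hS, x, hx => by
    have hlt : sSup (Subtype.val '' S) < ω₁ :=
      sSup_lt_omega_one (hS.image _) (by rintro _ ⟨y, _, rfl⟩; exact y.2)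
    show x ≤ supOm S
    rw [supOm, dif_pos hlt, ← Subtype.coe_le_coe]
    exact le_csSup ⟨ω₁, by rintro _ ⟨y, _, rfl⟩; exact y.2.le⟩ ⟨x, hx, rfl⟩
  | .arrow _ _, _, hS, f, hf => fun a => le_supEl (hS.image _) ⟨f, hf, rfl⟩

theorem supEl_le : ∀ {σ : Ty} {S : Set (El σ)} {b}, (∀ x ∈ S, Le σ x b) → Le σ (supEl σ S) b
  | .base, S, b, hb => by
    show supOm S ≤ b
    unfold supOm
    split
    · rw [← Subtype.coe_le_coe]
      rcases (Subtype.val '' S).eq_empty_or_nonempty with he | hne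
      · simp [he]
      · exact csSup_le hne (by rintro _ ⟨y, hy, rfl⟩; exact hb y hy)
    · exact Subtype.coe_le_coe.1 zero_le
  | .arrow _ _, _, _, hb => fun a => supEl_le (by rintro _ ⟨f, hf, rfl⟩; exact hb f hf a)

theorem infEl_le : ∀ {σ : Ty} {S : Set (El σ)} {x}, x ∈ S → Le σ (infEl σ S) x
  | .base, _, x, hx => by
    show infOm _ ≤ x
    rw [← Subtype.coe_le_coe]
    exact csInf_le (OrderBot.bddBelow _) ⟨x, hx, rfl⟩
  | .arrow _ _, _, f, hf => fun a => infEl_le ⟨f, hf, rfl⟩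

theorem le_infEl : ∀ {σ : Ty} {S : Set (El σ)} {b}, S.Nonempty → (∀ x ∈ S, Le σ b x) →
    Le σ b (infEl σ S)
  | .base, _, _, hne, hb => by
    show _ ≤ infOm _
    rw [← Subtype.coe_le_coe]
    exact le_csInf (hne.image _) (by rintro _ ⟨y, hy, rfl⟩; exact hb y hy)
  | .arrow _ _, _, _, hne, hb => fun a =>
    le_infEl (hne.image _) (by rintro _ ⟨f, hf, rfl⟩; exact hb f hf a)

section Limsup

variable {σ : Ty} {ζ : Ordinal} {u : ∀ ξ : Ordinal, ξ < ζ → El σ}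

theorem countable_tail (hζ : ζ < ω₁) (γ : Ordinal) :
    {z | ∃ ξ, ∃ h : ξ < ζ, γ ≤ ξ ∧ z = u ξ h}.Countable := by
  have := (countable_Iio_of_lt_omega_one hζ).to_subtype
  refine (Set.countable_range fun p : Set.Iio ζ => u p.1 p.2).mono ?_
  rintro _ ⟨ξ, h, -, rfl⟩
  exact ⟨⟨ξ, h⟩, rfl⟩

theorem le_limsupEl {b : El σ} {γ₀ : Ordinal} (hγ₀ : γ₀ < ζ) (hζ : ζ < ω₁)
    (hb : ∀ ξ (h : ξ < ζ), γ₀ ≤ ξ → Le σ b (u ξ h)) : Le σ b (limsupEl σ ζ u) := by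
  unfold limsupEl
  refine le_infEl ⟨_, γ₀, hγ₀, rfl⟩ ?_
  rintro _ ⟨γ, hγ, rfl⟩
  have hm : max γ γ₀ < ζ := max_lt hγ hγ₀
  exact (hb _ hm (le_max_right _ _)).trans
    (le_supEl (countable_tail hζ γ) ⟨max γ γ₀, hm, le_max_left _ _, rfl⟩)

theorem limsupEl_le {b : El σ} {γ₀ : Ordinal} (hγ₀ : γ₀ < ζ)
    (hb : ∀ ξ (h : ξ < ζ), γ₀ ≤ ξ → Le σ (u ξ h) b) : Le σ (limsupEl σ ζ u) b := by
  unfold limsupEl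
  refine Le.trans (infEl_le ⟨γ₀, hγ₀, rfl⟩) (supEl_le ?_)
  rintro _ ⟨ξ, h, hγξ, rfl⟩
  exact hb ξ h hγξ

end Limsup

theorem limsupEl_apply {ρ τ : Ty} {ζ : Ordinal} (u : ∀ ξ : Ordinal, ξ < ζ → El (.arrow ρ τ))
    (a : El ρ) : limsupEl (.arrow ρ τ) ζ u a = limsupEl τ ζ (fun ξ h => u ξ h a) := by
  have htail : ∀ γ, (fun f : El (.arrow ρ τ) => f a) '' {z | ∃ ξ, ∃ h : ξ < ζ, γ ≤ ξ ∧ z = u ξ h}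
      = {z | ∃ ξ, ∃ h : ξ < ζ, γ ≤ ξ ∧ z = u ξ h a} := by
    intro γ
    ext z
    constructor
    · rintro ⟨_, ⟨ξ, h, hγ, rfl⟩, rfl⟩; exact ⟨ξ, h, hγ, rfl⟩
    · rintro ⟨ξ, h, hγ, rfl⟩; exact ⟨_, ⟨ξ, h, hγ, rfl⟩, rfl⟩
  show infEl τ (_ '' _) = infEl τ _
  congr 1
  ext y
  constructor
  · rintro ⟨_, ⟨γ, hγ, rfl⟩, rfl⟩
    exact ⟨γ, hγ, by simp only [supEl, htail]⟩
  · rintro ⟨γ, hγ, rfl⟩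
    exact ⟨_, ⟨γ, hγ, rfl⟩, by simp only [supEl, htail]⟩

theorem hp_arrow_of_ne {ρ τ : Ty} (h : ρ ≠ τ) (f : El (.arrow ρ τ)) : Hp (.arrow ρ τ) f := by
  simp [Hp, HPaux, h]

theorem hp_arrow_iff {τ : Ty} {f : El (.arrow τ τ)} :
    Hp (.arrow τ τ) f ↔
      (∀ x, Hp τ x → Hp τ (f x)) ∧ (∀ x, Hp τ x → HpLe τ x (f x)) ∧
      (∀ x y, Hp τ x → Hp τ y → HpLe τ x y → HpLe τ (f x) (f y)) := by
  show (dite _ _ _ : Prop) ↔ _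
  rw [dif_pos rfl]
  rfl

theorem hpLe_arrow_iff_of_ne {ρ τ : Ty} (h : ρ ≠ τ) {f g : El (.arrow ρ τ)} :
    HpLe (.arrow ρ τ) f g ↔ Le (.arrow ρ τ) f g := by
  show (ite _ _ _ : Prop) ↔ _
  rw [if_neg h]

theorem hpLe_arrow_iff {τ : Ty} {f g : El (.arrow τ τ)} :
    HpLe (.arrow τ τ) f g ↔ ∀ x, Hp τ x → HpLe τ (f x) (g x) := by
  show (ite _ _ _ : Prop) ↔ _
  rw [if_pos rfl]
  rfl

theorem HpLe.refl : ∀ {σ : Ty} (x : El σ), HpLe σ x x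
  | .base, _ => le_rfl
  | .arrow ρ τ, f => by
    by_cases h : ρ = τ
    · subst h
      exact hpLe_arrow_iff.2 fun a _ => HpLe.refl (f a)
    · exact (hpLe_arrow_iff_of_ne h).2 (Le.refl f)

theorem HpLe.trans : ∀ {σ : Ty} {x y z : El σ}, HpLe σ x y → HpLe σ y z → HpLe σ x z
  | .base, _, _, _, h, h' => le_trans h h'
  | .arrow ρ τ, _, _, _, h, h' => by
    by_cases hρτ : ρ = τ
    · subst hρτ
      rw [hpLe_arrow_iff] at *
      exact fun a ha => (h a ha).trans (h' a ha)
    · rw [hpLe_arrow_iff_of_ne hρτ] at *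
      exact Le.trans h h'

theorem HpEq.refl {σ : Ty} (x : El σ) : HpEq σ x x := ⟨HpLe.refl x, HpLe.refl x⟩

theorem HpEq.symm {σ : Ty} {x y : El σ} (h : HpEq σ x y) : HpEq σ y x := ⟨h.2, h.1⟩

theorem HpEq.trans {σ : Ty} {x y z : El σ} (h : HpEq σ x y) (h' : HpEq σ y z) : HpEq σ x z :=
  ⟨h.1.trans h'.1, h'.2.trans h.2⟩

theorem hpEq_arrow_iff {τ : Ty} {f g : El (.arrow τ τ)} :
    HpEq (.arrow τ τ) f g ↔ ∀ x, Hp τ x → HpEq τ (f x) (g x) := by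
  simp only [HpEq, hpLe_arrow_iff]
  exact ⟨fun h x hx => ⟨h.1 x hx, h.2 x hx⟩, fun h => ⟨fun x hx => (h x hx).1, fun x hx => (h x hx).2⟩⟩

section Hp

variable {τ : Ty} {f : El (.arrow τ τ)} {x y : El τ}

theorem Hp.map (hf : Hp (.arrow τ τ) f) (hx : Hp τ x) : Hp τ (f x) :=
  (hp_arrow_iff.1 hf).1 x hx

theorem Hp.le_map (hf : Hp (.arrow τ τ) f) (hx : Hp τ x) : HpLe τ x (f x) :=
  (hp_arrow_iff.1 hf).2.1 x hx

theorem Hp.mono (hf : Hp (.arrow τ τ) f) (hx : Hp τ x) (hy : Hp τ y) (hxy : HpLe τ x y) :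
    HpLe τ (f x) (f y) :=
  (hp_arrow_iff.1 hf).2.2 x y hx hy hxy

theorem Hp.congr (hf : Hp (.arrow τ τ) f) (hx : Hp τ x) (hy : Hp τ y) (h : HpEq τ x y) :
    HpEq τ (f x) (f y) :=
  ⟨hf.mono hx hy h.1, hf.mono hy hx h.2⟩

end Hp

theorem hpLe_limsupEl : ∀ {σ : Ty} {ζ : Ordinal} {u : ∀ ξ : Ordinal, ξ < ζ → El σ} {b : El σ}
    {γ₀ : Ordinal}, γ₀ < ζ → ζ < ω₁ → (∀ ξ (h : ξ < ζ), γ₀ ≤ ξ → HpLe σ b (u ξ h)) →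
    HpLe σ b (limsupEl σ ζ u)
  | .base, _, _, _, _, hγ₀, hζ, hb => le_limsupEl (σ := .base) hγ₀ hζ hb
  | .arrow ρ τ, _, u, _, _, hγ₀, hζ, hb => by
    by_cases hρτ : ρ = τ
    · subst hρτ
      refine hpLe_arrow_iff.2 fun a ha => ?_
      rw [limsupEl_apply]
      exact hpLe_limsupEl hγ₀ hζ fun ξ h hγξ => hpLe_arrow_iff.1 (hb ξ h hγξ) a ha
    · rw [hpLe_arrow_iff_of_ne hρτ]
      exact le_limsupEl hγ₀ hζ fun ξ h hγξ => (hpLe_arrow_iff_of_ne hρτ).1 (hb ξ h hγξ)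

theorem limsupEl_hpLe : ∀ {σ : Ty} {ζ : Ordinal} {u : ∀ ξ : Ordinal, ξ < ζ → El σ} {b : El σ}
    {γ₀ : Ordinal}, γ₀ < ζ → (∀ ξ (h : ξ < ζ), γ₀ ≤ ξ → HpLe σ (u ξ h) b) →
    HpLe σ (limsupEl σ ζ u) b
  | .base, _, _, _, _, hγ₀, hb => limsupEl_le (σ := .base) hγ₀ hb
  | .arrow ρ τ, _, u, _, _, hγ₀, hb => by
    by_cases hρτ : ρ = τ
    · subst hρτ
      refine hpLe_arrow_iff.2 fun a ha => ?_
      rw [limsupEl_apply]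
      exact limsupEl_hpLe hγ₀ fun ξ h hγξ => hpLe_arrow_iff.1 (hb ξ h hγξ) a ha
    · rw [hpLe_arrow_iff_of_ne hρτ]
      exact limsupEl_le hγ₀ fun ξ h hγξ => (hpLe_arrow_iff_of_ne hρτ).1 (hb ξ h hγξ)

theorem limsupEl_hpEq {σ : Ty} {ζ : Ordinal} {u : ∀ ξ : Ordinal, ξ < ζ → El σ} {c : El σ}
    {γ₀ : Ordinal} (hγ₀ : γ₀ < ζ) (hζ : ζ < ω₁)
    (hu : ∀ ξ (h : ξ < ζ), γ₀ ≤ ξ → HpEq σ (u ξ h) c) : HpEq σ (limsupEl σ ζ u) c :=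
  ⟨limsupEl_hpLe hγ₀ fun ξ h hξ => (hu ξ h hξ).1, hpLe_limsupEl hγ₀ hζ fun ξ h hξ => (hu ξ h hξ).2⟩

def HpMonotone (σ : Ty) {ζ : Ordinal} (u : ∀ ξ : Ordinal, ξ < ζ → El σ) : Prop :=
  ∀ ξ ξ' (h : ξ < ζ) (h' : ξ' < ζ), ξ ≤ ξ' → HpLe σ (u ξ h) (u ξ' h')

theorem HpMonotone.apply {τ : Ty} {ζ : Ordinal} {u : ∀ ξ : Ordinal, ξ < ζ → El (.arrow τ τ)}
    (hu : HpMonotone (.arrow τ τ) u) {a : El τ} (ha : Hp τ a) :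
    HpMonotone τ (fun ξ h => u ξ h a) :=
  fun ξ ξ' h h' hle => hpLe_arrow_iff.1 (hu ξ ξ' h h' hle) a ha

theorem HpMonotone.hpLe_limsupEl {σ : Ty} {ζ : Ordinal} {u : ∀ ξ : Ordinal, ξ < ζ → El σ}
    (hu : HpMonotone σ u) (hζ : ζ < ω₁) {ξ : Ordinal} (h : ξ < ζ) :
    HpLe σ (u ξ h) (limsupEl σ ζ u) :=
  IterOrd.hpLe_limsupEl h hζ fun ξ' h' hle => hu ξ ξ' h h' hle

theorem limsupEl_hpLe_limsupEl {σ : Ty} {ζ ζ' : Ordinal} {u : ∀ ξ : Ordinal, ξ < ζ → El σ}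
    {v : ∀ η : Ordinal, η < ζ' → El σ} (hζ : 0 < ζ) (hζ' : ζ' < ω₁) (hv : HpMonotone σ v)
    (huv : ∀ ξ (h : ξ < ζ), ∃ η, ∃ h' : η < ζ', HpLe σ (u ξ h) (v η h')) :
    HpLe σ (limsupEl σ ζ u) (limsupEl σ ζ' v) :=
  limsupEl_hpLe hζ fun ξ h _ => by
    obtain ⟨η, h', hle⟩ := huv ξ h
    exact hle.trans (hv.hpLe_limsupEl hζ' h')

theorem hp_limsupEl : ∀ {σ : Ty} {ζ : Ordinal} {u : ∀ ξ : Ordinal, ξ < ζ → El σ},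
    0 < ζ → ζ < ω₁ → (∀ ξ (h : ξ < ζ), Hp σ (u ξ h)) → HpMonotone σ u →
    Hp σ (limsupEl σ ζ u)
  | .base, _, _, _, _, _, _ => trivial
  | .arrow ρ τ, _, u, hζ, hζω, hu, hmono => by
    by_cases hρτ : ρ = τ
    · subst hρτ
      refine hp_arrow_iff.2 ⟨fun a ha => ?_, fun a ha => ?_, fun a a' ha ha' haa => ?_⟩
      · rw [limsupEl_apply]
        exact hp_limsupEl hζ hζω (fun ξ h => (hu ξ h).map ha) (hmono.apply ha)
      · rw [limsupEl_apply]
        exact hpLe_limsupEl hζ hζω fun ξ h _ => (hu ξ h).le_map ha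
      · rw [limsupEl_apply u a, limsupEl_apply u a']
        exact limsupEl_hpLe hζ fun ξ h _ =>
          ((hu ξ h).mono ha ha' haa).trans ((hmono.apply ha').hpLe_limsupEl hζω h)
    · exact hp_arrow_of_ne hρτ _

theorem iter_zero (σ : Ty) (f : El σ → El σ) (x : El σ) : Iter σ 0 f x = x := by
  unfold Iter; rw [Ordinal.limitRecOn_zero]

theorem iter_add_one (σ : Ty) (β : Ordinal) (f : El σ → El σ) (x : El σ) :
    Iter σ (β + 1) f x = f (Iter σ β f x) := by
  unfold Iter; rw [Ordinal.limitRecOn_add_one]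

theorem iter_limit (σ : Ty) {μ : Ordinal} (h : Order.IsSuccLimit μ) (f : El σ → El σ)
    (x : El σ) : Iter σ μ f x = limsupEl σ μ (fun ξ _ => Iter σ ξ f x) := by
  unfold Iter; rw [Ordinal.limitRecOn_limit _ _ _ _ h]

theorem iter_one (σ : Ty) (f : El σ → El σ) (x : El σ) : Iter σ 1 f x = f x := by
  simpa only [zero_add, iter_zero] using iter_add_one σ 0 f x

theorem iter_zero_eq (σ : Ty) : Iter σ 0 = fun _ x => x :=
  funext fun f => funext (iter_zero σ f)

theorem iter_one_eq (σ : Ty) : Iter σ 1 = fun f => f :=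
  funext fun f => funext (iter_one σ f)

section Iter

variable {σ : Ty} {f : El (.arrow σ σ)} {x : El σ}

theorem hp_iter_and_hpLe_iter (hf : Hp (.arrow σ σ) f) (hx : Hp σ x) {β : Ordinal}
    (hβ : β < ω₁) : Hp σ (Iter σ β f x) ∧ ∀ ξ ≤ β, HpLe σ (Iter σ ξ f x) (Iter σ β f x) := by
  induction β using Ordinal.limitRecOn with
  | zero =>
    refine ⟨by rwa [iter_zero], fun ξ hξ => ?_⟩
    rw [nonpos_iff_eq_zero.1 hξ]
    exact HpLe.refl _
  | add_one β IH =>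
    obtain ⟨hp, hle⟩ := IH ((lt_add_one β).trans hβ)
    rw [iter_add_one]
    refine ⟨hf.map hp, fun ξ hξ => ?_⟩
    rcases hξ.lt_or_eq with hlt | rfl
    · exact (hle ξ (Order.lt_add_one_iff.1 hlt)).trans (hf.le_map hp)
    · rw [iter_add_one]
      exact HpLe.refl _
  | limit β hlim IH =>
    have hmono : HpMonotone σ (fun ξ (_ : ξ < β) => Iter σ ξ f x) :=
      fun ξ ξ' _ h' hle => (IH ξ' h' (h'.trans hβ)).2 ξ hle
    rw [iter_limit σ hlim]
    refine ⟨hp_limsupEl hlim.pos hβ (fun ξ h => (IH ξ h (h.trans hβ)).1) hmono, fun ξ hξ => ?_⟩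
    rcases hξ.lt_or_eq with hlt | rfl
    · exact hmono.hpLe_limsupEl hβ hlt
    · rw [iter_limit σ hlim]
      exact HpLe.refl _

theorem hp_iter (hf : Hp (.arrow σ σ) f) (hx : Hp σ x) {β : Ordinal} (hβ : β < ω₁) :
    Hp σ (Iter σ β f x) :=
  (hp_iter_and_hpLe_iter hf hx hβ).1

theorem iter_hpLe_iter_of_le (hf : Hp (.arrow σ σ) f) (hx : Hp σ x) {ξ β : Ordinal}
    (hξβ : ξ ≤ β) (hβ : β < ω₁) : HpLe σ (Iter σ ξ f x) (Iter σ β f x) :=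
  (hp_iter_and_hpLe_iter hf hx hβ).2 ξ hξβ

theorem hpMonotone_iter (hf : Hp (.arrow σ σ) f) (hx : Hp σ x) {ζ : Ordinal} (hζ : ζ ≤ ω₁) :
    HpMonotone σ (fun ξ (_ : ξ < ζ) => Iter σ ξ f x) :=
  fun _ _ _ h' hle => iter_hpLe_iter_of_le hf hx hle (h'.trans_le hζ)

theorem iter_hpLe_iter {g : El (.arrow σ σ)} (hf : Hp (.arrow σ σ) f) (hg : Hp (.arrow σ σ) g)
    (hfg : HpLe (.arrow σ σ) f g) {y : El σ} (hx : Hp σ x) (hy : Hp σ y) (hxy : HpLe σ x y)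
    {β : Ordinal} (hβ : β < ω₁) : HpLe σ (Iter σ β f x) (Iter σ β g y) := by
  induction β using Ordinal.limitRecOn with
  | zero =>
    rw [iter_zero, iter_zero]
    exact hxy
  | add_one β IH =>
    have hβ' : β < ω₁ := (lt_add_one β).trans hβ
    rw [iter_add_one, iter_add_one]
    exact (hf.mono (hp_iter hf hx hβ') (hp_iter hg hy hβ') (IH hβ')).trans
      (hpLe_arrow_iff.1 hfg _ (hp_iter hg hy hβ'))
  | limit β hlim IH =>
    rw [iter_limit σ hlim, iter_limit σ hlim]
    exact limsupEl_hpLe_limsupEl hlim.pos hβ (hpMonotone_iter hg hy hβ.le)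
      fun ξ h => ⟨ξ, h, IH ξ h (h.trans hβ)⟩

theorem hp_iter_fun (hf : Hp (.arrow σ σ) f) {β : Ordinal} (hβ : β < ω₁) :
    Hp (.arrow σ σ) (Iter σ β f) :=
  hp_arrow_iff.2 ⟨fun _ hx => hp_iter hf hx hβ,
    fun x hx => by simpa only [iter_zero] using iter_hpLe_iter_of_le hf hx (zero_le (a := β)) hβ,
    fun _ _ hx hy hxy => iter_hpLe_iter hf hf (HpLe.refl f) hx hy hxy hβ⟩

theorem hp_iterFun {γ : Ordinal} (h1 : 1 ≤ γ) (hγ : γ < ω₁) :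
    Hp (.arrow (.arrow σ σ) (.arrow σ σ)) (Iter σ γ) :=
  hp_arrow_iff.2 ⟨fun _ hg => hp_iter_fun hg hγ,
    fun g hg => hpLe_arrow_iff.2 fun x hx => by
      simpa only [iter_one] using iter_hpLe_iter_of_le hg hx h1 hγ,
    fun _ _ hg hg' hgg' => hpLe_arrow_iff.2 fun x hx =>
      iter_hpLe_iter hg hg' hgg' hx hx (HpLe.refl x) hγ⟩

end Iter

theorem iter_hpEq_of_map_hpEq {σ : Ty} {f : El σ → El σ} {x c : El σ} (hx : HpEq σ (f x) c)
    (hf : ∀ y, HpEq σ y c → HpEq σ (f y) c) {α : Ordinal} (hα : α < ω₁) (hα0 : α ≠ 0) :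
    HpEq σ (Iter σ α f x) c := by
  induction α using Ordinal.limitRecOn with
  | zero => exact absurd rfl hα0
  | add_one α IH =>
    rw [iter_add_one]
    rcases eq_or_ne α 0 with rfl | hα0'
    · rwa [iter_zero]
    · exact hf _ (IH ((lt_add_one α).trans hα) hα0')
  | limit α hlim IH =>
    rw [iter_limit σ hlim]
    exact limsupEl_hpEq (Ordinal.one_lt_of_isSuccLimit hlim) hα fun ξ h h1 =>
      IH ξ h (h.trans hα) (Order.one_le_iff_ne_zero.1 h1)

section Arithmetic

variable {σ : Ty} {f : El (.arrow σ σ)} {x : El σ}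

theorem iter_hpEq_limsupEl_of_cofinal (hf : Hp (.arrow σ σ) f) (hx : Hp σ x) {μ ν : Ordinal}
    (hμ : Order.IsSuccLimit μ) (hμω : μ < ω₁) (hν : 0 < ν) (hνω : ν < ω₁)
    {v : ∀ ξ : Ordinal, ξ < ν → El σ} (hv : HpMonotone σ v) {s : Ordinal → Ordinal}
    (hs : ∀ ξ < ν, s ξ < μ) (hcof : ∀ η < μ, ∃ ξ < ν, η ≤ s ξ)
    (hsv : ∀ ξ (h : ξ < ν), HpEq σ (Iter σ (s ξ) f x) (v ξ h)) :
    HpEq σ (Iter σ μ f x) (limsupEl σ ν v) := by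
  rw [iter_limit σ hμ]
  constructor
  · refine limsupEl_hpLe_limsupEl hμ.pos hνω hv fun η h => ?_
    obtain ⟨ξ, hξ, hη⟩ := hcof η h
    exact ⟨ξ, hξ, (iter_hpLe_iter_of_le hf hx hη ((hs ξ hξ).trans hμω)).trans (hsv ξ hξ).1⟩
  · exact limsupEl_hpLe_limsupEl hν hμω (hpMonotone_iter hf hx hμω.le)
      fun ξ h => ⟨s ξ, hs ξ h, (hsv ξ h).2⟩

theorem iter_add (hf : Hp (.arrow σ σ) f) (hx : Hp σ x) {β δ : Ordinal} (hβ : β < ω₁)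
    (hδ : δ < ω₁) : HpEq σ (Iter σ (β + δ) f x) (Iter σ δ f (Iter σ β f x)) := by
  induction δ using Ordinal.limitRecOn with
  | zero =>
    rw [add_zero, iter_zero]
    exact HpEq.refl _
  | add_one δ IH =>
    have hδ' : δ < ω₁ := (lt_add_one δ).trans hδ
    rw [← add_assoc, iter_add_one, iter_add_one]
    exact hf.congr (hp_iter hf hx (isPrincipal_add_omega 1 hβ hδ'))
      (hp_iter hf (hp_iter hf hx hβ) hδ') (IH hδ')
  | limit δ hlim IH =>
    rw [iter_limit σ hlim]
    exact iter_hpEq_limsupEl_of_cofinal hf hx (isSuccLimit_add β hlim)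
      (isPrincipal_add_omega 1 hβ hδ) hlim.pos hδ (hpMonotone_iter hf (hp_iter hf hx hβ) hδ.le)
      (fun ξ h => add_lt_add_right h β)
      (fun η h => ((lt_add_iff_of_isSuccLimit hlim).1 h).imp fun _ ⟨hξ, hη⟩ => ⟨hξ, hη.le⟩)
      (fun ξ h => IH ξ h (h.trans hδ))

theorem iter_mul (hf : Hp (.arrow σ σ) f) (hx : Hp σ x) {β δ : Ordinal} (hβ : β < ω₁)
    (hδ : δ < ω₁) : HpEq σ (Iter σ (β * δ) f x) (Iter σ δ (Iter σ β f) x) := by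
  induction δ using Ordinal.limitRecOn with
  | zero =>
    rw [mul_zero, iter_zero, iter_zero]
    exact HpEq.refl x
  | add_one δ IH =>
    have hδ' : δ < ω₁ := (lt_add_one δ).trans hδ
    have hβδ : β * δ < ω₁ := isPrincipal_mul_omega 1 hβ hδ'
    rw [mul_add_one, iter_add_one]
    exact (iter_add hf hx hβδ hβ).trans ((hp_iter_fun hf hβ).congr (hp_iter hf hx hβδ)
      (hp_iter (hp_iter_fun hf hβ) hx hδ') (IH hδ'))
  | limit δ hlim IH =>
    rcases eq_zero_or_pos β with rfl | hβ0
    · rw [zero_mul, iter_zero]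
      refine (iter_hpEq_of_map_hpEq ?_ (fun y hy => by rwa [iter_zero]) hδ hlim.pos.ne').symm
      rw [iter_zero]
      exact HpEq.refl x
    · rw [iter_limit σ hlim]
      exact iter_hpEq_limsupEl_of_cofinal hf hx (isSuccLimit_mul_right hβ0 hlim)
        (isPrincipal_mul_omega 1 hβ hδ) hlim.pos hδ
        (hpMonotone_iter (hp_iter_fun hf hβ) hx hδ.le)
        (fun ξ h => mul_lt_mul_of_pos_left h hβ0)
        (fun η h => ((lt_mul_iff_of_isSuccLimit hlim).1 h).imp fun _ ⟨hξ, hη⟩ => ⟨hξ, hη.le⟩)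
        (fun ξ h => IH ξ h (h.trans hδ))

end Arithmetic

theorem iter_iterFun_hpEq_iter_opow_of_one_lt (τ : Ty) {γ : Ordinal} (hγ1 : 1 < γ)
    (hγ : γ < ω₁) {α : Ordinal} (hα : α < ω₁) :
    HpEq (.arrow (.arrow τ τ) (.arrow τ τ))
      (Iter (.arrow τ τ) α (Iter τ γ)) (Iter τ (γ ^ α)) := by
  have hF := hp_iterFun (σ := τ) hγ1.le hγ
  induction α using Ordinal.limitRecOn with
  | zero =>
    rw [opow_zero, iter_zero_eq, iter_one_eq]
    exact HpEq.refl _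
  | add_one α IH =>
    have hα' : α < ω₁ := (lt_add_one α).trans hα
    have hγα : γ ^ α < ω₁ := isPrincipal_opow_omega 1 hγ hα'
    refine hpEq_arrow_iff.2 fun g hg => hpEq_arrow_iff.2 fun x hx => ?_
    rw [iter_add_one, opow_add_one]
    have hIH := hpEq_arrow_iff.1 (IH hα') g hg
    exact (hpEq_arrow_iff.1 (hF.congr (hp_iter hF hg hα') (hp_iter_fun hg hγα) hIH) x hx).trans
      (iter_mul hg hx hγα hγ).symm
  | limit α hlim IH =>
    refine hpEq_arrow_iff.2 fun g hg => hpEq_arrow_iff.2 fun x hx => ?_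
    rw [iter_limit _ hlim, limsupEl_apply]
    refine (iter_hpEq_limsupEl_of_cofinal hg hx (isSuccLimit_opow hγ1 hlim)
      (isPrincipal_opow_omega 1 hγ hα) hlim.pos hα ((hpMonotone_iter hF hg hα.le).apply hx)
      (fun ξ h => (opow_lt_opow_iff_right hγ1).2 h)
      (fun η h => ((lt_opow_of_isSuccLimit (zero_lt_one.trans hγ1).ne' hlim).1 h).imp
        fun _ ⟨hξ, hη⟩ => ⟨hξ, hη.le⟩)
      (fun ξ h => ?_)).symm
    exact (hpEq_arrow_iff.1 (hpEq_arrow_iff.1 (IH ξ h (h.trans hα)) g hg) x hx).symm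

/-- For every finite type `τ` and countable ordinals `α`, `γ`:
`Iter_α^{τ→τ} (Iter_γ^τ) =hp Iter_{γ^α}^τ`. -/
theorem iter_iterFun_hpEq_iter_opow (τ : Ty) (α γ : Ordinal) (hα : α < ω₁) (hγ : γ < ω₁) :
    HpEq (.arrow (.arrow τ τ) (.arrow τ τ))
      (Iter (.arrow τ τ) α (Iter τ γ)) (Iter τ (γ ^ α)) := by
  rcases eq_or_ne α 0 with rfl | hα0
  · rw [opow_zero, iter_zero_eq, iter_one_eq]
    exact HpEq.refl _
  rcases lt_trichotomy γ 1 with hγ0 | rfl | hγ1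
  · rw [Order.lt_one_iff.1 hγ0, zero_opow hα0, iter_zero_eq]
    exact hpEq_arrow_iff.2 fun _ _ =>
      iter_hpEq_of_map_hpEq (HpEq.refl _) (fun _ _ => HpEq.refl _) hα hα0
  · rw [one_opow, iter_one_eq]
    exact hpEq_arrow_iff.2 fun g _ => iter_hpEq_of_map_hpEq (HpEq.refl g) (fun _ hy => hy) hα hα0
  · exact iter_iterFun_hpEq_iter_opow_of_one_lt τ hγ1 hγ hα

end IterOrd
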